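/- arXiv:1608.04592 — 4 statements merged into one kernel-verified Lean document; each statement's English description precedes it below -/
import Mathlib

section
/- For any variable x and data constraint φ, the existentially quantified constraint ∃x.φ is logically equivalent to the result of syntactic existential quantification ∃fun_x(φ), where ∃fun_x(φ) equals φ[t/x] for the least determinant t of x in φ if x has a determinant in φ, and equals ∃x.φ otherwise. -/
/-- Data terms over variables `V` and data `D`. -/
inductive DTerm (V D : Type) where
  | var : V → DTerm V D
  | const : D → DTerm V D
  | app : (List D → D) → List (DTerm V D) → DTerm V D

/-- Data atoms. -/
inductive Atom (V D : Type) where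
  | bot : Atom V D
  | top : Atom V D
  | eq : DTerm V D → DTerm V D → Atom V D
  | rel : (List D → Prop) → List (DTerm V D) → Atom V D

/-- Data literals: atoms or negated atoms. -/
inductive Lit (V D : Type) where
  | pos : Atom V D → Lit V D
  | neg : Atom V D → Lit V D

/-- Data constraints: existential quantifications over a conjunction of literals. -/
inductive DC (V D : Type) where
  | ex : V → DC V D → DC V D
  | conj : List (Lit V D) → DC V D

/-- Data assignments: partial functions from variables to data (`none` = nil). -/
abbrev Assg (V D : Type) := V → Option D

/-- Term evaluation; returns `none` (nil) if some variable is undefined. -/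
def evalT (σ : Assg V D) : DTerm V D → Option D
  | .var x => σ x
  | .const d => some d
  | .app f ts => (ts.attach.mapM (fun t => evalT σ t.1)).map f
decreasing_by simp only [DTerm.app.sizeOf_spec]; have := List.sizeOf_lt_of_mem t.2; omega

/-- Variables of a term. -/
def varsT : DTerm V D → List V
  | .var x => [x]
  | .const _ => []
  | .app _ ts => ts.attach.flatMap (fun t => varsT t.1)
decreasing_by simp only [DTerm.app.sizeOf_spec]; have := List.sizeOf_lt_of_mem t.2; omega

def varsA : Atom V D → List V
  | .bot => []
  | .top => []
  | .eq t1 t2 => varsT t1 ++ varsT t2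
  | .rel _ ts => ts.flatMap varsT

def varsL : Lit V D → List V
  | .pos a => varsA a
  | .neg a => varsA a

/-- Free variables of a data constraint. -/
def freeDC [DecidableEq V] : DC V D → List V
  | .ex y φ => (freeDC φ).filter (fun z => z ≠ y)
  | .conj ls => ls.flatMap varsL

/-- Variables occurring (in atoms of) a data constraint. -/
def varsDC : DC V D → List V
  | .ex _ φ => varsDC φ
  | .conj ls => ls.flatMap varsL

/-- Bound variables (quantifier prefix) of a data constraint. -/
def boundDC : DC V D → List V
  | .ex y φ => y :: boundDC φ
  | .conj _ => []

/-- Literals of the conjunctive kernel of a data constraint. -/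
def lits : DC V D → List (Lit V D)
  | .ex _ φ => lits φ
  | .conj ls => ls

def symmEq : Lit V D → Option (Lit V D)
  | .pos (.eq t1 t2) => some (.pos (.eq t2 t1))
  | _ => none

/-- ≐-symmetric closure of the kernel literals. -/
def litsym (φ : DC V D) : List (Lit V D) := lits φ ++ (lits φ).filterMap symmEq

/-- Satisfaction of atoms. -/
def satA (σ : Assg V D) : Atom V D → Prop
  | .bot => False
  | .top => True
  | .eq t1 t2 => ∃ d, evalT σ t1 = some d ∧ evalT σ t2 = some d
  | .rel R ts => ∃ ds, ts.mapM (evalT σ) = some ds ∧ R ds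

/-- Satisfaction of literals. -/
def satL (σ : Assg V D) : Lit V D → Prop
  | .pos a => satA σ a
  | .neg a => (∀ x ∈ varsA a, (σ x).isSome) ∧ ¬ satA σ a

/-- Entailment of data constraints. -/
def sat [DecidableEq V] (σ : Assg V D) : DC V D → Prop
  | .ex x φ => ∃ d : D, sat (Function.update σ x (some d)) φ
  | .conj ls => ∀ l ∈ ls, satL σ l

open Classical in
/-- Restriction of an assignment to a set of variables. -/
noncomputable def restrict (σ : Assg V D) (X : Set V) : Assg V D :=
  fun x => if x ∈ X then σ x else none

/-- Substitution in terms. -/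
def substT [DecidableEq V] (x : V) (t : DTerm V D) : DTerm V D → DTerm V D
  | .var y => if y = x then t else .var y
  | .const d => .const d
  | .app f ts => .app f (ts.attach.map (fun s => substT x t s.1))
decreasing_by simp only [DTerm.app.sizeOf_spec]; have := List.sizeOf_lt_of_mem s.2; omega

def substA [DecidableEq V] (x : V) (t : DTerm V D) : Atom V D → Atom V D
  | .bot => .bot
  | .top => .top
  | .eq t1 t2 => .eq (substT x t t1) (substT x t t2)
  | .rel R ts => .rel R (ts.map (substT x t))

def substL [DecidableEq V] (x : V) (t : DTerm V D) : Lit V D → Lit V D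
  | .pos a => .pos (substA x t a)
  | .neg a => .neg (substA x t a)

/-- Capture-free substitution in data constraints (skipping under a binder of the same name). -/
def substDC [DecidableEq V] (x : V) (t : DTerm V D) : DC V D → DC V D
  | .ex y φ => if y = x then .ex y φ else .ex y (substDC x t φ)
  | .conj ls => .conj (ls.map (substL x t))

/-- Determinants of a variable in an atom. -/
def detA [DecidableEq V] (x : V) : Atom V D → List (DTerm V D)
  | .eq t1 t2 =>
      (match t1 with
        | .var y => if y = x ∧ x ∉ varsT t2 then [t2] else []
        | _ => []) ++
      (match t2 with
        | .var y => if y = x ∧ x ∉ varsT t1 then [t1] else []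
        | _ => [])
  | _ => []

def detL [DecidableEq V] (x : V) : Lit V D → List (DTerm V D)
  | .pos a => detA x a
  | .neg _ => []

/-- Determinants of a variable in a data constraint. -/
def detDC [DecidableEq V] (x : V) : DC V D → List (DTerm V D)
  | .ex y φ => if y = x then [] else detDC x φ
  | .conj ls => ls.flatMap (detL x)

/-- Syntactic existential quantification: substitute the least determinant if one exists. -/
def exFun [DecidableEq V] (x : V) (φ : DC V D) : DC V D :=
  match detDC x φ with
  | [] => .ex x φ
  | t :: _ => substDC x t φ

/-- Constraint automata over states `Q`, variables `V` (ports and pre/post memory variables)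
and data `D`. -/
structure CA (Q V D : Type) where
  states : Set Q
  Pall : Set V
  Pin : Set V
  Pout : Set V
  preM : Set V
  postM : Set V
  trans : Set (Q × Set V × DC V D × Q)
  init : Q

/-- Data constraints occurring on transitions. -/
def CA.dcs (A : CA Q V D) : Set (DC V D) :=
  {φ | ∃ q P q', (q, P, φ, q') ∈ A.trans}

/-- Hide a port: remove it from the port sets and existentially quantify it in data constraints. -/
def CA.hide (A : CA Q V D) (p : V) : CA Q V D :=
  { A with
    Pall := A.Pall \ {p}, Pin := A.Pin \ {p}, Pout := A.Pout \ {p},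
    trans := (fun tr => (tr.1, tr.2.1 \ {p}, DC.ex p tr.2.2.1, tr.2.2.2)) '' A.trans }

/-- Eliminate a port: remove it from the port sets and apply syntactic existential
quantification to data constraints. -/
def CA.elim [DecidableEq V] (A : CA Q V D) (p : V) : CA Q V D :=
  { A with
    Pall := A.Pall \ {p}, Pin := A.Pin \ {p}, Pout := A.Pout \ {p},
    trans := (fun tr => (tr.1, tr.2.1 \ {p}, exFun p tr.2.2.1, tr.2.2.2)) '' A.trans }

open Classical in
/-- Substitute a data constraint `φ'` for every occurrence of `φ` on transitions. -/
noncomputable def CA.substCA (A : CA Q V D) (φ φ' : DC V D) : CA Q V D :=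
  { A with
    trans := (fun tr => (tr.1, tr.2.1, if tr.2.2.1 = φ then φ' else tr.2.2.1, tr.2.2.2)) '' A.trans }

/-- Data commands. -/
inductive Cmd (V D : Type) where
  | skip : Cmd V D
  | nil : Cmd V D                       -- the empty command ε
  | assign : V → DTerm V D → Cmd V D
  | guard : DC V D → Cmd V D → Cmd V D  -- failure statement φ → π
  | seq : Cmd V D → Cmd V D → Cmd V D

/-- Small-step semantics on configurations; the state `none` is the fail state. -/
inductive Step [DecidableEq V] :
    Cmd V D × Option (Assg V D) → Cmd V D × Option (Assg V D) → Prop where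
  | skip {σ : Assg V D} : Step (.skip, some σ) (.nil, some σ)
  | assign {x t} {σ : Assg V D} :
      Step (.assign x t, some σ) (.nil, some (Function.update σ x (evalT σ t)))
  | guardT {φ π} {σ : Assg V D} : sat σ φ → Step (.guard φ π, some σ) (π, some σ)
  | guardF {φ π} {σ : Assg V D} : ¬ sat σ φ → Step (.guard φ π, some σ) (.nil, none)
  | seqStep {π π' π''} {σ σ' : Assg V D} :
      Step (π, some σ) (π', some σ') → π' ≠ .nil →
      Step (.seq π π'', some σ) (.seq π' π'', some σ')
  | seqDone {π π''} {σ σ' : Assg V D} :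
      Step (π, some σ) (.nil, some σ') → Step (.seq π π'', some σ) (π'', some σ')
  | seqFail {π π' π''} {σ : Assg V D} :
      Step (π, some σ) (π', none) → Step (.seq π π'', some σ) (.nil, none)

/-- Reflexive-transitive closure of the small-step semantics. -/
def Steps [DecidableEq V] :
    Cmd V D × Option (Assg V D) → Cmd V D × Option (Assg V D) → Prop :=
  Relation.ReflTransGen Step

/-- Partial-correctness semantics: successfully reachable final states. -/
def final [DecidableEq V] (π : Cmd V D) (S : Set (Assg V D)) : Set (Assg V D) :=
  {σ' | ∃ σ ∈ S, Steps (π, some σ) (.nil, some σ')}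

/-- Total-correctness semantics: additionally contains `none` (fail) if some execution fails. -/
def finalFail [DecidableEq V] (π : Cmd V D) (S : Set (Assg V D)) : Set (Option (Assg V D)) :=
  (some '' final π S) ∪
    {ς | ς = none ∧ ∃ σ ∈ S, ∃ π', Steps (π, some σ) (π', none)}

/-- Partial-correctness Hoare proof system (assertions as sets of assignments). -/
inductive HoareP [DecidableEq V] : Set (Assg V D) → Cmd V D → Set (Assg V D) → Prop where
  | skip {P} : HoareP P .skip P
  | assign {P : Set (Assg V D)} {x t} :
      HoareP {σ | Function.update σ x (evalT σ t) ∈ P} (.assign x t) P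
  | seq {P1 Pm P2 π1 π2} : HoareP P1 π1 Pm → HoareP Pm π2 P2 → HoareP P1 (.seq π1 π2) P2
  | cons {P1 P1' P2 P2' π} : HoareP P1' π P2' → P1 ⊆ P1' → P2' ⊆ P2 → HoareP P1 π P2
  | guard {P P' φ π} : HoareP (P ∩ {σ | sat σ φ}) π P' → HoareP P (.guard φ π) P'

/-- Total-correctness Hoare proof system. -/
inductive HoareT [DecidableEq V] : Set (Assg V D) → Cmd V D → Set (Assg V D) → Prop where
  | skip {P} : HoareT P .skip P
  | assign {P : Set (Assg V D)} {x t} :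
      HoareT {σ | Function.update σ x (evalT σ t) ∈ P} (.assign x t) P
  | seq {P1 Pm P2 π1 π2} : HoareT P1 π1 Pm → HoareT Pm π2 P2 → HoareT P1 (.seq π1 π2) P2
  | cons {P1 P1' P2 P2' π} : HoareT P1' π P2' → P1 ⊆ P1' → P2' ⊆ P2 → HoareT P1 π P2
  | guard {P P' φ π} :
      HoareT P π P' → P ⊆ {σ | sat σ φ} → HoareT P (.guard φ π) P'
  | decomp {P P1 P2 π} : HoareP P π P1 → HoareT P π P2 → HoareT P π (P1 ∩ P2)

/-- The literal `x ≐ t`. -/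
def eqLit (x : V) (t : DTerm V D) : Lit V D := .pos (.eq (.var x) t)

/-- A single-literal data constraint. -/
def litDC (l : Lit V D) : DC V D := .conj [l]

open Classical in
/-- Translation of the ordered equalities: assignment if the variable is fresh,
failure statement otherwise. -/
noncomputable def commEqs [DecidableEq V] (X : Set V) :
    List V → List (V × DTerm V D) → Cmd V D
  | _, [] => .skip
  | done, (x, t) :: rest =>
      .seq (if x ∈ X ∨ x ∈ done then .guard (litDC (eqLit x t)) .skip else .assign x t)
           (commEqs X (x :: done) rest)

/-- Translation of remaining literals into failure statements. -/
def commRest : List (Lit V D) → Cmd V D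
  | [] => .skip
  | l :: rest => .seq (.guard (litDC l) .skip) (commRest rest)

/-- Commandification: output of Algorithm 1 on the linearized literals. -/
noncomputable def commandify [DecidableEq V] (X : Set V)
    (eqs : List (V × DTerm V D)) (rest : List (Lit V D)) : Cmd V D :=
  .seq (commEqs X [] eqs) (commRest rest)

/-- The full literal list `ℓ1, …, ℓ_{n+m}` of a commandification problem. -/
def commLits (eqs : List (V × DTerm V D)) (rest : List (Lit V D)) : List (Lit V D) :=
  eqs.map (fun p => eqLit p.1 p.2) ++ rest

/-- Requirements of the commandification algorithm: the first `n` literals are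
equalities `x_i ≐ t_i` linearized so that all dependencies of each `t_i` are either
uncontrollable (in `X`) or assigned earlier, and every variable outside `X` occurs
among `x_1, …, x_n`. -/
def CommReq [DecidableEq V] (X : Set V)
    (eqs : List (V × DTerm V D)) (rest : List (Lit V D)) : Prop :=
  (∀ l ∈ commLits eqs rest, ∀ y ∈ varsL l, y ∈ X ∨ y ∈ eqs.map Prod.fst) ∧
  (∀ i (h : i < eqs.length), ∀ y ∈ varsT (eqs.get ⟨i, h⟩).2,
      y ∈ X ∨ y ∈ (eqs.take i).map Prod.fst)

/-- B-graphs: hypergraphs whose b-arcs have a set of tails and one head. -/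
structure BGraph (V : Type) where
  arcs : Set (Set V × V)

/-- The single-tailed arc relation obtained by splitting b-arcs. -/
def BGraph.rel (G : BGraph V) (a b : V) : Prop := ∃ T, (T, b) ∈ G.arcs ∧ a ∈ T

/-- Layers of the greedy exploration from the root. -/
def BGraph.layer (G : BGraph V) (root : V) : ℕ → Set V
  | 0 => {root}
  | n + 1 => G.layer root n ∪ {v | ∃ T, (T, v) ∈ G.arcs ∧ T ⊆ G.layer root n}

/-- Relation induced by a choice of one incoming b-arc per vertex. -/
def chosenRel (choice : V → Option (Set V)) (a b : V) : Prop :=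
  ∃ T, choice b = some T ∧ a ∈ T

/-- A ⋆-arborescence: one incoming b-arc per non-root vertex, acyclically. -/
def IsArbor (G : BGraph V) (root : V) (choice : V → Option (Set V)) : Prop :=
  choice root = none ∧
  (∀ v, v ≠ root → ∃ T, choice v = some T ∧ (T, v) ∈ G.arcs) ∧
  (∀ v, ¬ Relation.TransGen (chosenRel choice) v v)

/-- The data relation encoding a data command `π` run from initial states over `X`,
recording the values of the variables `xs`. -/
def cmdRel [DecidableEq V] (π : Cmd V D) (X : Set V) (xs : List V) (ds : List D) : Prop :=
  ∃ σ0 σ : Assg V D, (∀ x ∈ X, (σ0 x).isSome) ∧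
    Steps (π, some σ0) (.nil, some σ) ∧ xs.map σ = ds.map some

open Classical in
/-- `commfun`: encode the commandification of `φ` as a data relation applied to the
ordered free variables of `φ`, when the B-graph of `φ` over `X` has a ⋆-arborescence
and `X ⊆ free(φ)`; otherwise leave `φ` unchanged.  The algorithm producing the data
command and the arborescence test are parameters `alg` and `hasArb`. -/
noncomputable def commfun [LinearOrder V] (alg : DC V D → Set V → Cmd V D)
    (hasArb : DC V D → Set V → Prop) (φ : DC V D) (X : Set V) : DC V D :=
  let xs := (freeDC φ).toFinset.sort (· ≤ ·)
  if hasArb φ X ∧ X ⊆ {x | x ∈ freeDC φ} then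
    .conj [.pos (.rel (fun ds => cmdRel (alg φ X) X xs ds) (xs.map .var))]
  else φ

/-- The uncontrollable variables of a data constraint in an automaton. -/
def CA.uncontr [DecidableEq V] (A : CA Q V D) (φ : DC V D) : Set V :=
  {x | x ∈ freeDC φ} ∩ (A.Pin ∪ A.preM)

/-- Commandify an automaton. -/
noncomputable def CA.comm [LinearOrder V] (A : CA Q V D)
    (alg : DC V D → Set V → Cmd V D) (hasArb : DC V D → Set V → Prop) : CA Q V D :=
  { A with
    trans := (fun tr =>
      (tr.1, tr.2.1, commfun alg hasArb tr.2.2.1 (A.uncontr tr.2.2.1), tr.2.2.2)) '' A.trans }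

/-!
A determinant literal `x ≐ t` with `x ∉ t` forces the witness of `∃x` to be the value of `t`,
so on a conjunction `ψ`, `∃x.ψ` holds at `σ` iff `ψ` holds at `σ[x ↦ ⟦t⟧σ]`, i.e. iff
`ψ[t/x]` holds at `σ`. The quantifiers `∃y` (`y ≠ x`) of the prefix commute with `∃x`, and the
equivalence is proved for every assignment, so it passes under them even when `t` mentions `y`:
`t` then refers to the same bound `y` as the determinant literal does.
-/

theorem List.mapM_congr_left {m : Type → Type} [Monad m] [LawfulMonad m] {α β : Type}
    {l : List α} {f g : α → m β} (h : ∀ a ∈ l, f a = g a) : l.mapM f = l.mapM g := by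
  induction l with
  | nil => rfl
  | cons a l ih =>
    simp only [List.mapM_cons, h a List.mem_cons_self,
      ih fun b hb => h b (List.mem_cons_of_mem a hb)]

theorem List.isSome_mapM {α β : Type} (l : List α) (f : α → Option β) :
    (l.mapM f).isSome ↔ ∀ a ∈ l, (f a).isSome := by
  induction l with
  | nil => simp
  | cons a l ih =>
    rw [List.mapM_cons, List.forall_mem_cons, ← ih]
    cases f a <;> cases l.mapM f <;> simp

section Terms

variable {V D : Type}

theorem evalT_app (σ : Assg V D) (f : List D → D) (ts : List (DTerm V D)) :
    evalT σ (.app f ts) = (ts.mapM (evalT σ)).map f := by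
  rw [evalT, List.mapM_subtype (g := evalT σ) fun _ _ => rfl, List.unattach_attach]

theorem varsT_app (f : List D → D) (ts : List (DTerm V D)) :
    varsT (.app f ts) = ts.flatMap varsT := by
  rw [varsT, List.flatMap_def, List.flatMap_def, List.attach_map_val]

theorem substT_app [DecidableEq V] (x : V) (t : DTerm V D)
    (f : List D → D) (ts : List (DTerm V D)) :
    substT x t (.app f ts) = .app f (ts.map (substT x t)) := by
  rw [substT, List.attach_map_val]

theorem evalT_congr {σ σ' : Assg V D} :
    ∀ s : DTerm V D, (∀ y ∈ varsT s, σ y = σ' y) → evalT σ s = evalT σ' s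
  | .var y, h => by simpa [evalT] using h y (by simp [varsT])
  | .const _, _ => by simp [evalT]
  | .app f ts, h => by
    rw [evalT_app, evalT_app, List.mapM_congr_left fun s hs =>
      evalT_congr s fun y hy => h y (by rw [varsT_app]; exact List.mem_flatMap.2 ⟨s, hs, hy⟩)]
decreasing_by simp only [DTerm.app.sizeOf_spec]; have := List.sizeOf_lt_of_mem hs; omega

theorem isSome_evalT (σ : Assg V D) :
    ∀ s : DTerm V D, (evalT σ s).isSome ↔ ∀ y ∈ varsT s, (σ y).isSome
  | .var y => by simp [evalT, varsT]
  | .const _ => by simp [evalT, varsT]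
  | .app f ts => by
    rw [evalT_app, varsT_app, Option.isSome_map, List.isSome_mapM, List.forall_mem_flatMap]
    exact forall₂_congr fun s hs => isSome_evalT σ s
decreasing_by simp only [DTerm.app.sizeOf_spec]; have := List.sizeOf_lt_of_mem hs; omega

theorem evalT_update_of_notMem [DecidableEq V] {σ : Assg V D} {x : V} {s : DTerm V D}
    (hx : x ∉ varsT s) (o : Option D) : evalT (Function.update σ x o) s = evalT σ s :=
  evalT_congr s fun _ hy => Function.update_of_ne (ne_of_mem_of_not_mem hy hx) o σ

theorem evalT_substT [DecidableEq V] (σ : Assg V D) (x : V) (t : DTerm V D) :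
    ∀ s : DTerm V D, evalT σ (substT x t s) = evalT (Function.update σ x (evalT σ t)) s
  | .var y => by by_cases h : y = x <;> simp [substT, h, evalT]
  | .const _ => by simp [substT, evalT]
  | .app f ts => by
    rw [substT_app, evalT_app, evalT_app, List.mapM_map]
    exact congrArg _ (List.mapM_congr_left fun s hs => evalT_substT σ x t s)
decreasing_by simp only [DTerm.app.sizeOf_spec]; have := List.sizeOf_lt_of_mem hs; omega

theorem forall_varsT_substT_isSome [DecidableEq V] (σ : Assg V D) (x : V) (t s : DTerm V D) :
    (∀ y ∈ varsT (substT x t s), (σ y).isSome) ↔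
      ∀ y ∈ varsT s, (Function.update σ x (evalT σ t) y).isSome := by
  rw [← isSome_evalT, evalT_substT, isSome_evalT]

end Terms

section Substitution

variable {V D : Type} [DecidableEq V]

theorem satA_substA (σ : Assg V D) (x : V) (t : DTerm V D) (a : Atom V D) :
    satA σ (substA x t a) ↔ satA (Function.update σ x (evalT σ t)) a := by
  cases a with
  | bot | top => rfl
  | eq t₁ t₂ => simp only [substA, satA, evalT_substT]
  | rel R ts => simp only [substA, satA, List.mapM_map, Function.comp_def, evalT_substT]

theorem forall_varsA_substA_isSome (σ : Assg V D) (x : V) (t : DTerm V D) (a : Atom V D) :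
    (∀ y ∈ varsA (substA x t a), (σ y).isSome) ↔
      ∀ y ∈ varsA a, (Function.update σ x (evalT σ t) y).isSome := by
  cases a with
  | bot | top => simp [substA, varsA]
  | eq t₁ t₂ =>
    simp only [substA, varsA, List.forall_mem_append, forall_varsT_substT_isSome]
  | rel R ts =>
    simp only [substA, varsA, List.flatMap_map, List.forall_mem_flatMap,
      forall_varsT_substT_isSome]

theorem satL_substL (σ : Assg V D) (x : V) (t : DTerm V D) (l : Lit V D) :
    satL σ (substL x t l) ↔ satL (Function.update σ x (evalT σ t)) l := by
  cases l with
  | pos a => exact satA_substA σ x t a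
  | neg a =>
    exact and_congr (forall_varsA_substA_isSome σ x t a) (not_congr (satA_substA σ x t a))

theorem sat_substDC_conj (σ : Assg V D) (x : V) (t : DTerm V D) (ls : List (Lit V D)) :
    sat σ (substDC x t (.conj ls)) ↔ sat (Function.update σ x (evalT σ t)) (.conj ls) := by
  simp only [substDC, sat, List.forall_mem_map, satL_substL]

end Substitution

section Determinants

variable {V D : Type} [DecidableEq V]

theorem mem_detL {x : V} {t : DTerm V D} {l : Lit V D} (h : t ∈ detL x l) :
    x ∉ varsT t ∧ (l = .pos (.eq (.var x) t) ∨ l = .pos (.eq t (.var x))) := by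
  rcases l with (_ | _ | ⟨t₁, t₂⟩ | _) | _ <;> simp only [detL, detA, List.not_mem_nil] at h
  rw [List.mem_append] at h
  rcases h with h | h <;> split at h <;> (try split_ifs at h with hy) <;>
    simp only [List.mem_singleton, List.not_mem_nil] at h <;> subst h <;> simp [hy.1, hy.2]

theorem satL_iff_of_mem_detL {x : V} {t : DTerm V D} {l : Lit V D} (h : t ∈ detL x l)
    (σ : Assg V D) : satL σ l ↔ ∃ d, σ x = some d ∧ evalT σ t = some d := by
  rcases (mem_detL h).2 with rfl | rfl <;> simp only [satL, satA, evalT]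
  exact exists_congr fun _ => and_comm

theorem sat_ex_conj_iff_of_mem_detL {x : V} {t : DTerm V D} {l : Lit V D}
    {ls : List (Lit V D)} (hl : l ∈ ls) (ht : t ∈ detL x l) (σ : Assg V D) :
    sat σ (.ex x (.conj ls)) ↔ sat σ (substDC x t (.conj ls)) := by
  rw [sat_substDC_conj]
  constructor
  · rintro ⟨d, hd⟩
    obtain ⟨d', hx, ht'⟩ := (satL_iff_of_mem_detL ht _).1 (hd l hl)
    rw [Function.update_self] at hx
    rw [evalT_update_of_notMem (mem_detL ht).1, ← hx] at ht'
    rwa [ht']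
  · intro h
    obtain ⟨d, hx, -⟩ := (satL_iff_of_mem_detL ht _).1 (h l hl)
    rw [Function.update_self] at hx
    exact ⟨d, hx ▸ h⟩

theorem sat_ex_iff_sat_substDC_of_mem_detDC {x : V} {t : DTerm V D} :
    ∀ {φ : DC V D}, t ∈ detDC x φ → ∀ σ, sat σ (.ex x φ) ↔ sat σ (substDC x t φ)
  | .conj ls, ht => by
    obtain ⟨l, hl, htl⟩ := List.mem_flatMap.1 ht
    exact sat_ex_conj_iff_of_mem_detL hl htl
  | .ex y ψ, ht => fun σ => by
    have hyx : y ≠ x := fun h => by simp [detDC, h] at ht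
    rw [detDC, if_neg hyx] at ht
    simp only [substDC, if_neg hyx, sat]
    rw [exists_comm]
    refine exists_congr fun e => ?_
    simp only [← sat_ex_iff_sat_substDC_of_mem_detDC ht, sat,
      Function.update_comm hyx]

end Determinants

/-- ∃x.φ is logically equivalent to the syntactic existential
quantification ∃fun_x(φ). -/
theorem ex_equiv_exFun {V D : Type} [DecidableEq V] (x : V) (φ : DC V D) :
    ∀ σ : Assg V D, sat σ (.ex x φ) ↔ sat σ (exFun x φ) := by
  intro σ
  rw [exFun]
  rcases hdet : detDC x φ with _ | ⟨t, _⟩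
  · rfl
  · exact sat_ex_iff_sat_substDC_of_mem_detDC (hdet ▸ List.mem_cons_self) σ
end

section
/- Eliminating an ever-determined port removes it from all data constraints: if p is an ever-determined port of a constraint automaton A (i.e., for every data constraint φ occurring on a transition of A, if p occurs in φ then p has a determinant in φ), then p does not occur in any data constraint of A ⊘ p. -/
/-! A determinant `t` of `p` never mentions `p`, and its existence forces `p` out of the
quantifier prefix, so `φ[t/p]` no longer contains `p`. When `p` has no determinant,
ever-determinedness says `p` did not occur in `φ`, and `∃p.φ` has the same variables. -/

section Elimination

variable {V D : Type} [DecidableEq V] {p : V} {t : DTerm V D}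

theorem notMem_varsT_substT (ht : p ∉ varsT t) : ∀ s : DTerm V D, p ∉ varsT (substT p t s)
  | .var y => by
      by_cases hy : y = p
      · simpa [substT, hy] using ht
      · simpa [substT, hy, varsT] using Ne.symm hy
  | .const _ => by simp [substT, varsT]
  | .app f ts => by
      simp only [substT, varsT, List.mem_flatMap, List.mem_attach, true_and,
        Subtype.exists, List.mem_map]
      rintro ⟨_, ⟨u, hu, rfl⟩, hp⟩
      exact notMem_varsT_substT ht u hp
decreasing_by simp only [DTerm.app.sizeOf_spec]; have := List.sizeOf_lt_of_mem hu; omega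

theorem notMem_varsA_substA (ht : p ∉ varsT t) (a : Atom V D) : p ∉ varsA (substA p t a) := by
  cases a with
  | bot | top => simp [substA, varsA]
  | eq t₁ t₂ =>
      simpa [substA, varsA] using ⟨notMem_varsT_substT ht t₁, notMem_varsT_substT ht t₂⟩
  | rel R ts =>
      simp only [substA, varsA, List.mem_flatMap, List.mem_map]
      rintro ⟨_, ⟨u, -, rfl⟩, hp⟩
      exact notMem_varsT_substT ht u hp

theorem notMem_varsL_substL (ht : p ∉ varsT t) (l : Lit V D) : p ∉ varsL (substL p t l) := by
  cases l <;> exact notMem_varsA_substA ht _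

theorem notMem_varsDC_substDC (ht : p ∉ varsT t) :
    ∀ {φ : DC V D}, p ∉ boundDC φ → p ∉ varsDC (substDC p t φ)
  | .ex y φ, hb => by
      have hy : y ≠ p := fun h => hb (h ▸ List.mem_cons_self)
      simp only [substDC, if_neg hy, varsDC]
      exact notMem_varsDC_substDC ht fun h => hb (List.mem_cons_of_mem y h)
  | .conj ls, _ => by
      simp only [substDC, varsDC, List.mem_flatMap, List.mem_map]
      rintro ⟨_, ⟨l, -, rfl⟩, hp⟩
      exact notMem_varsL_substL ht l hp

theorem notMem_varsT_of_mem_detA {a : Atom V D} (h : t ∈ detA p a) : p ∉ varsT t := by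
  cases a with
  | eq t₁ t₂ =>
      cases t₁ <;> cases t₂ <;> simp only [detA, List.mem_append] at h <;> grind
  | _ => simp [detA] at h

theorem notMem_varsT_of_mem_detDC : ∀ {φ : DC V D}, t ∈ detDC p φ → p ∉ varsT t
  | .ex y φ, h => by
      by_cases hy : y = p
      · simp [detDC, hy] at h
      · exact notMem_varsT_of_mem_detDC (by simpa [detDC, hy] using h)
  | .conj ls, h => by
      obtain ⟨l, -, hl⟩ := List.mem_flatMap.1 h
      cases l with
      | pos a => exact notMem_varsT_of_mem_detA hl
      | neg a => simp [detL] at hl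

theorem notMem_boundDC_of_detDC_ne_nil : ∀ {φ : DC V D}, detDC p φ ≠ [] → p ∉ boundDC φ
  | .ex y φ, h => by
      by_cases hy : y = p
      · simp [detDC, hy] at h
      · simp only [detDC, if_neg hy] at h
        simpa [boundDC, Ne.symm hy] using notMem_boundDC_of_detDC_ne_nil h
  | .conj _, _ => by simp [boundDC]

theorem notMem_varsDC_exFun {φ : DC V D} (hdet : p ∈ varsDC φ → detDC p φ ≠ []) :
    p ∉ varsDC (exFun p φ) := by
  unfold exFun
  rcases hd : detDC p φ with _ | ⟨t, _⟩
  · exact fun hp => hdet hp hd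
  · have ht : t ∈ detDC p φ := hd ▸ List.mem_cons_self
    exact notMem_varsDC_substDC (notMem_varsT_of_mem_detDC ht)
      (notMem_boundDC_of_detDC_ne_nil (hd ▸ List.cons_ne_nil _ _))

end Elimination

theorem CA.exists_eq_exFun_of_mem_dcs_elim {Q V D : Type} [DecidableEq V] {A : CA Q V D}
    {p : V} {ψ : DC V D} (hψ : ψ ∈ (A.elim p).dcs) : ∃ φ ∈ A.dcs, ψ = exFun p φ := by
  obtain ⟨_, _, _, ⟨q, P, φ, q'⟩, htr, heq⟩ := hψ
  exact ⟨φ, ⟨q, P, q', htr⟩, (congrArg (·.2.2.1) heq).symm⟩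

/-- eliminating an ever-determined port removes it from all data
constraints of the automaton. -/
theorem elim_everDetermined {Q V D : Type} [DecidableEq V] (A : CA Q V D) (p : V)
    (hed : ∀ φ ∈ A.dcs, p ∈ varsDC φ → detDC p φ ≠ []) :
    ∀ φ ∈ (A.elim p).dcs, p ∉ varsDC φ := by
  intro ψ hψ
  obtain ⟨φ, hφ, rfl⟩ := CA.exists_eq_exFun_of_mem_dcs_elim hψ
  exact notMem_varsDC_exFun (hed φ hφ)
end

section
/- Soundness of the partial-correctness Hoare proof system for data commands: if a triple {φ} π {φ'} is derivable in the proof system (with rules for skip, assignment, sequential composition, consequence, and the failure-statement rule deriving {φ} (ℓ → π) {φ'} from {φ ∧ ℓ} π {φ'}), then it is valid in the partial-correctness sense: every successful execution of π from a state satisfying φ ends in a state satisfying φ'. -/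
namespace Cmd

variable {V D : Type} [DecidableEq V]

theorem not_step_fail {π : Cmd V D} {c : Cmd V D × Option (Assg V D)} :
    ¬ Step (π, none) c := by
  rintro ⟨⟩

theorem not_steps_fail {π π' : Cmd V D} {σ' : Assg V D} :
    ¬ Steps (π, none) (π', some σ') := by
  intro h
  rcases Relation.ReflTransGen.cases_head h with h | ⟨_, hs, _⟩
  · simp at h
  · exact not_step_fail hs

theorem steps_nil_eq {σ : Assg V D} {c : Cmd V D × Option (Assg V D)}
    (h : Steps (.nil, some σ) c) : c = (.nil, some σ) := by
  rcases Relation.ReflTransGen.cases_head h with h | ⟨_, hs, _⟩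
  · exact h.symm
  · cases hs

theorem exists_steps_of_steps_seq {π₁ π₂ : Cmd V D} {σ σ' : Assg V D}
    (h : Steps (.seq π₁ π₂, some σ) (.nil, some σ')) :
    ∃ σm, Steps (π₁, some σ) (.nil, some σm) ∧ Steps (π₂, some σm) (.nil, some σ') := by
  generalize hc : (Cmd.seq π₁ π₂, some σ) = c at h
  induction h using Relation.ReflTransGen.head_induction_on generalizing π₁ σ with
  | refl => simp at hc
  | head hs hrest ih =>
    subst hc
    cases hs with
    | seqStep hstep _ =>
      obtain ⟨σm, h₁, h₂⟩ := ih rfl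
      exact ⟨σm, .head hstep h₁, h₂⟩
    | seqDone hstep => exact ⟨_, .single hstep, hrest⟩
    | seqFail _ => exact absurd hrest not_steps_fail

end Cmd

section Final

open Cmd

variable {V D : Type} [DecidableEq V]

theorem final_mono {π : Cmd V D} {S T : Set (Assg V D)} (hST : S ⊆ T) :
    final π S ⊆ final π T := by
  rintro σ' ⟨σ, hσ, h⟩
  exact ⟨σ, hST hσ, h⟩

theorem final_skip (S : Set (Assg V D)) : final .skip S = S := by
  ext σ'
  constructor
  · rintro ⟨σ, hσ, h⟩
    rcases Relation.ReflTransGen.cases_head h with h | ⟨_, ⟨⟩, hrest⟩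
    · simp at h
    · cases steps_nil_eq hrest
      exact hσ
  · exact fun hσ' => ⟨σ', hσ', .single .skip⟩

theorem final_assign (x : V) (t : DTerm V D) (S : Set (Assg V D)) :
    final (.assign x t) S = (fun σ => Function.update σ x (evalT σ t)) '' S := by
  ext σ'
  constructor
  · rintro ⟨σ, hσ, h⟩
    rcases Relation.ReflTransGen.cases_head h with h | ⟨_, ⟨⟩, hrest⟩
    · simp at h
    · cases steps_nil_eq hrest
      exact ⟨σ, hσ, rfl⟩
  · rintro ⟨σ, hσ, rfl⟩
    exact ⟨σ, hσ, .single .assign⟩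

theorem final_guard (φ : DC V D) (π : Cmd V D) (S : Set (Assg V D)) :
    final (.guard φ π) S = final π (S ∩ {σ | sat σ φ}) := by
  ext σ'
  constructor
  · rintro ⟨σ, hσ, h⟩
    rcases Relation.ReflTransGen.cases_head h with h | ⟨_, hs, hrest⟩
    · simp at h
    cases hs with
    | guardT hφ => exact ⟨σ, ⟨hσ, hφ⟩, hrest⟩
    | guardF _ => exact absurd hrest not_steps_fail
  · rintro ⟨σ, ⟨hσ, hφ⟩, h⟩
    exact ⟨σ, hσ, .head (.guardT hφ) h⟩

/-- Only an inclusion: `ε ; π₂` is stuck, so equality fails for `π₁ = ε`. -/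
theorem final_seq_subset (π₁ π₂ : Cmd V D) (S : Set (Assg V D)) :
    final (.seq π₁ π₂) S ⊆ final π₂ (final π₁ S) := by
  rintro σ' ⟨σ, hσ, h⟩
  obtain ⟨σm, h₁, h₂⟩ := exists_steps_of_steps_seq h
  exact ⟨σm, ⟨σ, hσ, h₁⟩, h₂⟩

end Final

/-- soundness of the partial-correctness Hoare proof system: a derivable
triple {P} π {P'} is valid: every successful execution of π from a state in P ends
in a state in P'. -/
theorem hoareP_sound {V D : Type} [DecidableEq V]
    (P P' : Set (Assg V D)) (π : Cmd V D) (h : HoareP P π P') :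
    final π P ⊆ P' := by
  induction h with
  | skip => rw [final_skip]
  | assign => rw [final_assign]; exact Set.image_preimage_subset _ _
  | seq _ _ ih₁ ih₂ => exact (final_seq_subset _ _ _).trans ((final_mono ih₁).trans ih₂)
  | cons _ hP₁ hP₂ ih => exact (final_mono hP₁).trans (ih.trans hP₂)
  | guard _ ih => rwa [final_guard]
end

section
/- Combined soundness and completeness of commandification: under the algorithm's requirements with uncontrollable-variable set X, for every initial assignment σ0 with domain X mapping each x ∈ X to a datum: (i) if execution of the generated command π from σ0 terminates successfully in state σ, then σ ⊨ ℓ1 ∧ ⋯ ∧ ℓ_{n+m} and σ0 ⊆ σ; and (ii) if there exists σ' with σ' ⊨ ℓ1 ∧ ⋯ ∧ ℓ_{n+m} and σ0 ⊆ σ', then execution of π from σ0 terminates successfully. -/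
/-!
Along the equations, the state stays defined exactly on `X` and the `x_j` treated so far.
Each `t_i` mentions only such variables, so it evaluates to a datum, and the `i`-th command
either assigns it to a fresh `x_i`, making `x_i ≐ t_i` true, or checks `x_i ≐ t_i`. States only
grow along the run and positive literals are preserved by growth: this gives soundness.
Conversely, a solution `σ'` extending `σ0` extends every intermediate state, so each assignment
stores the value `x_i` has in `σ'` and each guard holds. Finally the state is defined on every
variable of the constraint, so it satisfies the same literals as `σ'`, and the remaining
failure statements pass.
-/

section Satisfaction

variable {V D : Type}

def Assg.Extends (σ σ' : Assg V D) : Prop := ∀ x d, σ x = some d → σ' x = some d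

theorem Assg.Extends.refl (σ : Assg V D) : σ.Extends σ := fun _ _ h => h

theorem Assg.Extends.trans {σ₁ σ₂ σ₃ : Assg V D} (h₁₂ : σ₁.Extends σ₂) (h₂₃ : σ₂.Extends σ₃) :
    σ₁.Extends σ₃ :=
  fun x d h => h₂₃ x d (h₁₂ x d h)

theorem Assg.extends_update_of_eq_none [DecidableEq V] {σ : Assg V D} {x : V} (hx : σ x = none)
    (v : Option D) : σ.Extends (Function.update σ x v) := by
  intro y d hy
  rcases eq_or_ne y x with rfl | hne
  · simp [hx] at hy
  · rwa [Function.update_of_ne hne]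

theorem Assg.Extends.update_left [DecidableEq V] {σ σ' : Assg V D} (h : σ.Extends σ') {x : V}
    {d : D} (hx : σ' x = some d) : Assg.Extends (Function.update σ x (some d)) σ' := by
  intro y e hy
  rcases eq_or_ne y x with rfl | hne
  · simp only [Function.update_self, Option.some.injEq] at hy
    rwa [← hy]
  · rw [Function.update_of_ne hne] at hy
    exact h y e hy

theorem List.mapM_eq_some_of_imp {α β : Type} {f g : α → Option β} :
    ∀ {l : List α} {bs : List β}, (∀ a ∈ l, ∀ b, f a = some b → g a = some b) →
      l.mapM f = some bs → l.mapM g = some bs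
  | [], _, _, h => h
  | a :: l, bs, hfg, h => by
    simp only [List.mapM_cons, Option.pure_def, Option.bind_eq_bind, Option.bind_eq_some_iff,
      Option.some.injEq] at h ⊢
    obtain ⟨b, hb, bs', hbs', rfl⟩ := h
    exact ⟨b, hfg a List.mem_cons_self b hb, bs',
      mapM_eq_some_of_imp (fun a ha => hfg a (List.mem_cons_of_mem _ ha)) hbs', rfl⟩

theorem List.exists_mapM_eq_some {α β : Type} {f : α → Option β} :
    ∀ {l : List α}, (∀ a ∈ l, ∃ b, f a = some b) → ∃ bs, l.mapM f = some bs
  | [], _ => ⟨[], rfl⟩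
  | a :: l, h => by
    obtain ⟨b, hb⟩ := h a List.mem_cons_self
    obtain ⟨bs, hbs⟩ := exists_mapM_eq_some fun a ha => h a (List.mem_cons_of_mem _ ha)
    exact ⟨b :: bs, by simp [hb, hbs]⟩

theorem Assg.Extends.evalT_eq_some {σ σ' : Assg V D} (h : σ.Extends σ') :
    ∀ (t : DTerm V D) (d : D), evalT σ t = some d → evalT σ' t = some d
  | .var x, d, ht => by rw [evalT] at ht ⊢; exact h x d ht
  | .const _, _, ht => by simpa [evalT] using ht
  | .app f ts, d, ht => by
    rw [evalT] at ht ⊢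
    obtain ⟨ds, hds, rfl⟩ := Option.map_eq_some_iff.1 ht
    rw [List.mapM_eq_some_of_imp (fun s _ e he => h.evalT_eq_some s.1 e he) hds]
    rfl
decreasing_by simp only [DTerm.app.sizeOf_spec]; have := List.sizeOf_lt_of_mem s.2; omega

theorem exists_evalT_eq_some {σ : Assg V D} :
    ∀ (t : DTerm V D), (∀ x ∈ varsT t, (σ x).isSome) → ∃ d, evalT σ t = some d
  | .var x, h => by simpa [evalT, Option.isSome_iff_exists] using h x (by simp [varsT])
  | .const c, _ => ⟨c, by simp [evalT]⟩
  | .app f ts, h => by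
    have hts : ∀ s ∈ ts.attach, ∃ d, evalT σ s.1 = some d := fun s _ =>
      exists_evalT_eq_some s.1 fun x hx => h x <| by
        simp only [varsT, List.mem_flatMap]
        exact ⟨s, List.mem_attach _ _, hx⟩
    obtain ⟨ds, hds⟩ := List.exists_mapM_eq_some hts
    exact ⟨f ds, by rw [evalT, hds]; rfl⟩
decreasing_by simp only [DTerm.app.sizeOf_spec]; have := List.sizeOf_lt_of_mem s.2; omega

theorem Assg.Extends.evalT_eq {σ σ' : Assg V D} (h : σ.Extends σ') {t : DTerm V D}
    (ht : ∀ x ∈ varsT t, (σ x).isSome) : evalT σ t = evalT σ' t := by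
  obtain ⟨d, hd⟩ := exists_evalT_eq_some t ht
  rw [hd, h.evalT_eq_some t d hd]

theorem Assg.Extends.satA_mono {σ σ' : Assg V D} (h : σ.Extends σ') {a : Atom V D}
    (ha : satA σ a) : satA σ' a := by
  cases a with
  | bot => exact ha.elim
  | top => trivial
  | eq t₁ t₂ =>
    obtain ⟨d, h₁, h₂⟩ := ha
    exact ⟨d, h.evalT_eq_some t₁ d h₁, h.evalT_eq_some t₂ d h₂⟩
  | rel R ts =>
    obtain ⟨ds, hds, hR⟩ := ha
    exact ⟨ds, List.mapM_eq_some_of_imp (fun t _ => h.evalT_eq_some t) hds, hR⟩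

theorem Assg.Extends.satA_iff {σ σ' : Assg V D} (h : σ.Extends σ') {a : Atom V D}
    (ha : ∀ x ∈ varsA a, (σ x).isSome) : satA σ a ↔ satA σ' a := by
  refine ⟨h.satA_mono, fun ha' => ?_⟩
  cases a with
  | bot => exact ha'.elim
  | top => trivial
  | eq t₁ t₂ =>
    simp only [varsA, List.mem_append] at ha
    simp only [satA, h.evalT_eq fun x hx => ha x (.inl hx),
      h.evalT_eq fun x hx => ha x (.inr hx)]
    exact ha'
  | rel R ts =>
    have hts : ∀ t ∈ ts, ∃ d, evalT σ t = some d := fun t ht =>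
      exists_evalT_eq_some t fun x hx => ha x (List.mem_flatMap.2 ⟨t, ht, hx⟩)
    obtain ⟨ds, hds⟩ := List.exists_mapM_eq_some hts
    obtain ⟨ds', hds', hR⟩ := ha'
    rw [List.mapM_eq_some_of_imp (fun t _ => h.evalT_eq_some t) hds, Option.some.injEq] at hds'
    exact ⟨ds, hds, hds' ▸ hR⟩

theorem Assg.Extends.satL_iff {σ σ' : Assg V D} (h : σ.Extends σ') {l : Lit V D}
    (hl : ∀ x ∈ varsL l, (σ x).isSome) : satL σ l ↔ satL σ' l := by
  cases l with
  | pos a => exact h.satA_iff hl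
  | neg a =>
    have hσ' : ∀ x ∈ varsA a, (σ' x).isSome := fun x hx => by
      obtain ⟨d, hd⟩ := Option.isSome_iff_exists.1 (hl x hx)
      simp [h x d hd]
    simp only [satL, h.satA_iff hl]
    exact ⟨fun h' => ⟨hσ', h'.2⟩, fun h' => ⟨hl, h'.2⟩⟩

theorem satL_eqLit {σ : Assg V D} {x : V} {t : DTerm V D} :
    satL σ (eqLit x t) ↔ ∃ d, σ x = some d ∧ evalT σ t = some d := by
  simp [eqLit, satL, satA, evalT]

theorem sat_litDC [DecidableEq V] {σ : Assg V D} {l : Lit V D} :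
    sat σ (litDC l) ↔ satL σ l := by
  simp [sat, litDC]

end Satisfaction

section Runs

variable {V D : Type} [DecidableEq V]

theorem eq_of_steps_nil {s : Option (Assg V D)} {c : Cmd V D × Option (Assg V D)}
    (h : Steps (.nil, s) c) : c = (.nil, s) := by
  rcases Relation.ReflTransGen.cases_head h with h | ⟨_, hstep, _⟩
  · exact h.symm
  · nomatch hstep

theorem eq_of_steps_none {π : Cmd V D} {c : Cmd V D × Option (Assg V D)}
    (h : Steps (π, none) c) : c = (π, none) := by
  rcases Relation.ReflTransGen.cases_head h with h | ⟨_, hstep, _⟩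
  · exact h.symm
  · nomatch hstep

theorem steps_skip_iff {σ σ' : Assg V D} :
    Steps (.skip, some σ) (.nil, some σ') ↔ σ' = σ := by
  refine ⟨fun h => ?_, fun h => h ▸ .single .skip⟩
  rcases Relation.ReflTransGen.cases_head h with h | ⟨_, hstep, hrest⟩
  · simp at h
  · cases hstep
    simpa [eq_comm] using eq_of_steps_nil hrest

theorem steps_assign_iff {x : V} {t : DTerm V D} {σ σ' : Assg V D} :
    Steps (.assign x t, some σ) (.nil, some σ') ↔ σ' = Function.update σ x (evalT σ t) := by
  refine ⟨fun h => ?_, fun h => h ▸ .single .assign⟩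
  rcases Relation.ReflTransGen.cases_head h with h | ⟨_, hstep, hrest⟩
  · simp at h
  · cases hstep
    simpa [eq_comm] using eq_of_steps_nil hrest

theorem steps_guard_skip_iff {φ : DC V D} {σ σ' : Assg V D} :
    Steps (.guard φ .skip, some σ) (.nil, some σ') ↔ sat σ φ ∧ σ' = σ := by
  refine ⟨fun h => ?_, by rintro ⟨hφ, rfl⟩; exact .head (.guardT hφ) (.single .skip)⟩
  rcases Relation.ReflTransGen.cases_head h with h | ⟨_, hstep, hrest⟩
  · simp at h
  · cases hstep with
    | guardT hφ => exact ⟨hφ, steps_skip_iff.1 hrest⟩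
    | guardF _ => simpa using eq_of_steps_nil hrest

theorem Steps.seq_left {π₁ π₂ : Cmd V D} {σ σ₁ : Assg V D} (hπ₁ : π₁ ≠ .nil)
    (h : Steps (π₁, some σ) (.nil, some σ₁)) : Steps (.seq π₁ π₂, some σ) (π₂, some σ₁) := by
  generalize hc : (π₁, some σ) = c at h
  induction h using Relation.ReflTransGen.head_induction_on generalizing π₁ σ with
  | refl => simp_all
  | @head _ c hstep hrest ih =>
    subst hc
    obtain ⟨π', _ | σ'⟩ := c
    · simpa using eq_of_steps_none hrest
    · by_cases hπ' : π' = .nil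
      · subst hπ'
        obtain rfl : σ' = σ₁ := by simpa [eq_comm] using eq_of_steps_nil hrest
        exact .single (.seqDone hstep)
      · exact .head (.seqStep hstep hπ') (ih hπ' rfl)

theorem Steps.exists_of_seq {π₁ π₂ : Cmd V D} {σ σ' : Assg V D}
    (h : Steps (.seq π₁ π₂, some σ) (.nil, some σ')) :
    ∃ σ₁, Steps (π₁, some σ) (.nil, some σ₁) ∧ Steps (π₂, some σ₁) (.nil, some σ') := by
  generalize hc : (Cmd.seq π₁ π₂, some σ) = c at h
  induction h using Relation.ReflTransGen.head_induction_on generalizing π₁ σ with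
  | refl => simp at hc
  | head hstep hrest ih =>
    subst hc
    cases hstep with
    | seqStep h₁ _ =>
      obtain ⟨σ₁, h₁', h₂⟩ := ih rfl
      exact ⟨σ₁, .head h₁ h₁', h₂⟩
    | seqDone h₁ => exact ⟨_, .single h₁, hrest⟩
    | seqFail _ => simpa using eq_of_steps_nil hrest

theorem steps_seq_iff {π₁ π₂ : Cmd V D} {σ σ' : Assg V D} (hπ₁ : π₁ ≠ .nil) :
    Steps (.seq π₁ π₂, some σ) (.nil, some σ') ↔
      ∃ σ₁, Steps (π₁, some σ) (.nil, some σ₁) ∧ Steps (π₂, some σ₁) (.nil, some σ') :=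
  ⟨Steps.exists_of_seq, fun ⟨_, h₁, h₂⟩ => (h₁.seq_left hπ₁).trans h₂⟩

end Runs

section Commandification

variable {V D : Type} {X : Set V}

def DepsOrdered (X : Set V) : List V → List (V × DTerm V D) → Prop
  | _, [] => True
  | done, (x, t) :: eqs => (∀ y ∈ varsT t, y ∈ X ∨ y ∈ done) ∧ DepsOrdered X (x :: done) eqs

theorem depsOrdered_of_forall_get :
    ∀ {done : List V} {eqs : List (V × DTerm V D)},
      (∀ i (h : i < eqs.length), ∀ y ∈ varsT (eqs.get ⟨i, h⟩).2,
        y ∈ X ∨ y ∈ done ∨ y ∈ (eqs.take i).map Prod.fst) → DepsOrdered X done eqs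
  | _, [], _ => trivial
  | done, (x, t) :: eqs, h => by
    refine ⟨fun y hy => by simpa using h 0 (by simp) y hy, depsOrdered_of_forall_get ?_⟩
    intro i hi y hy
    have := h (i + 1) (by simpa using hi) y (by simpa using hy)
    simp only [List.take_succ_cons, List.map_cons, List.mem_cons] at this ⊢
    tauto

theorem forall_mem_commLits {P : Lit V D → Prop} {eqs : List (V × DTerm V D)}
    {rest : List (Lit V D)} :
    (∀ l ∈ commLits eqs rest, P l) ↔ (∀ p ∈ eqs, P (eqLit p.1 p.2)) ∧ ∀ l ∈ rest, P l := by
  simp only [commLits, List.forall_mem_append, List.forall_mem_map]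

variable [DecidableEq V]

theorem CommReq.depsOrdered {eqs : List (V × DTerm V D)} {rest : List (Lit V D)}
    (h : CommReq X eqs rest) : DepsOrdered X [] eqs :=
  depsOrdered_of_forall_get fun i hi y hy => by simpa using h.2 i hi y hy

open Classical in
noncomputable def eqCmd (X : Set V) (done : List V) (x : V) (t : DTerm V D) : Cmd V D :=
  if x ∈ X ∨ x ∈ done then .guard (litDC (eqLit x t)) .skip else .assign x t

theorem eqCmd_ne_nil {done : List V} {x : V} {t : DTerm V D} : eqCmd X done x t ≠ .nil := by
  unfold eqCmd
  split_ifs <;> simp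

theorem commEqs_cons {done : List V} {x : V} {t : DTerm V D} {eqs : List (V × DTerm V D)} :
    commEqs X done ((x, t) :: eqs) = .seq (eqCmd X done x t) (commEqs X (x :: done) eqs) :=
  rfl

theorem commEqs_ne_nil {done : List V} {eqs : List (V × DTerm V D)} :
    commEqs X done eqs ≠ .nil := by
  cases eqs <;> simp [commEqs]

section OneEquation

variable {done : List V} {x : V} {t : DTerm V D} {σ : Assg V D}

theorem eqCmd_sound (hdom : ∀ y, (σ y).isSome ↔ y ∈ X ∨ y ∈ done)
    (ht : ∀ y ∈ varsT t, y ∈ X ∨ y ∈ done) {σ₁ : Assg V D}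
    (h : Steps (eqCmd X done x t, some σ) (.nil, some σ₁)) :
    σ.Extends σ₁ ∧ (∀ y, (σ₁ y).isSome ↔ y ∈ X ∨ y ∈ x :: done) ∧ satL σ₁ (eqLit x t) := by
  unfold eqCmd at h
  split_ifs at h with hx
  · obtain ⟨hsat, rfl⟩ := steps_guard_skip_iff.1 h
    refine ⟨.refl _, fun y => ?_, sat_litDC.1 hsat⟩
    rw [hdom, List.mem_cons]
    constructor
    · tauto
    · rintro (hy | rfl | hy) <;> tauto
  · obtain rfl := steps_assign_iff.1 h
    obtain ⟨d, hd⟩ := exists_evalT_eq_some t fun y hy => (hdom y).2 (ht y hy)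
    have hσx : σ x = none := Option.not_isSome_iff_eq_none.1 (by rwa [hdom])
    have hext := Assg.extends_update_of_eq_none hσx (evalT σ t)
    refine ⟨hext, fun y => ?_, ⟨d, by simp [hd, evalT], hext.evalT_eq_some t d hd⟩⟩
    rcases eq_or_ne y x with rfl | hne
    · simp [hd]
    · rw [Function.update_of_ne hne, hdom, List.mem_cons]
      tauto

theorem eqCmd_complete (hdom : ∀ y, (σ y).isSome ↔ y ∈ X ∨ y ∈ done)
    (ht : ∀ y ∈ varsT t, y ∈ X ∨ y ∈ done) {σ' : Assg V D} (hext : σ.Extends σ')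
    (hsat : satL σ' (eqLit x t)) :
    ∃ σ₁, Steps (eqCmd X done x t, some σ) (.nil, some σ₁) ∧ σ₁.Extends σ' := by
  unfold eqCmd
  split_ifs with hx
  · have hvars : ∀ y ∈ varsL (eqLit x t), (σ y).isSome := by
      simp only [eqLit, varsL, varsA, varsT, List.singleton_append, List.mem_cons]
      rintro y (rfl | hy)
      exacts [(hdom y).2 hx, (hdom y).2 (ht y hy)]
    exact ⟨σ, steps_guard_skip_iff.2 ⟨sat_litDC.2 ((hext.satL_iff hvars).2 hsat), rfl⟩, hext⟩
  · obtain ⟨d, hd⟩ := exists_evalT_eq_some t fun y hy => (hdom y).2 (ht y hy)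
    obtain ⟨e, hx', he⟩ := satL_eqLit.1 hsat
    -- `σ'` and the current state agree on `t`, so `x` receives the value it has in `σ'`
    obtain rfl : d = e := Option.some.inj ((hext.evalT_eq_some t d hd).symm.trans he)
    refine ⟨_, steps_assign_iff.2 rfl, ?_⟩
    rw [hd]
    exact hext.update_left hx'

end OneEquation

theorem commEqs_sound :
    ∀ {done : List V} {eqs : List (V × DTerm V D)} {σ σf : Assg V D},
      DepsOrdered X done eqs → (∀ y, (σ y).isSome ↔ y ∈ X ∨ y ∈ done) →
      Steps (commEqs X done eqs, some σ) (.nil, some σf) →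
      σ.Extends σf ∧ (∀ y, (σf y).isSome ↔ y ∈ X ∨ y ∈ done ∨ y ∈ eqs.map Prod.fst) ∧
        ∀ p ∈ eqs, satL σf (eqLit p.1 p.2)
  | _, [], σ, _, _, hdom, h => by
    obtain rfl := steps_skip_iff.1 (by simpa [commEqs] using h)
    exact ⟨.refl _, by simpa using hdom, by simp⟩
  | _, (x, t) :: eqs, _, _, ⟨ht, hdeps⟩, hdom, h => by
    rw [commEqs_cons, steps_seq_iff eqCmd_ne_nil] at h
    obtain ⟨σ₁, h₁, h₂⟩ := h
    obtain ⟨hext₁, hdom₁, hsat₁⟩ := eqCmd_sound hdom ht h₁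
    obtain ⟨hext, hdomf, hsat⟩ := commEqs_sound hdeps hdom₁ h₂
    have hsatx := hext.satA_mono (a := .eq (.var x) t) hsat₁
    refine ⟨hext₁.trans hext, fun y => ?_, List.forall_mem_cons.2 ⟨hsatx, hsat⟩⟩
    rw [hdomf, List.map_cons, List.mem_cons, List.mem_cons]
    tauto

theorem commEqs_complete {σ' : Assg V D} :
    ∀ {done : List V} {eqs : List (V × DTerm V D)} {σ : Assg V D},
      DepsOrdered X done eqs → (∀ y, (σ y).isSome ↔ y ∈ X ∨ y ∈ done) → σ.Extends σ' →
      (∀ p ∈ eqs, satL σ' (eqLit p.1 p.2)) →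
      ∃ σf, Steps (commEqs X done eqs, some σ) (.nil, some σf) ∧ σf.Extends σ'
  | _, [], σ, _, _, hext, _ => ⟨σ, .single .skip, hext⟩
  | _, (x, t) :: eqs, _, ⟨ht, hdeps⟩, hdom, hext, hsat => by
    obtain ⟨hsatx, hsat⟩ := List.forall_mem_cons.1 hsat
    obtain ⟨σ₁, h₁, hext₁⟩ := eqCmd_complete hdom ht hext hsatx
    obtain ⟨σf, h₂, hextf⟩ := commEqs_complete hdeps (eqCmd_sound hdom ht h₁).2.1 hext₁ hsat
    rw [commEqs_cons]
    exact ⟨σf, (steps_seq_iff eqCmd_ne_nil).2 ⟨σ₁, h₁, h₂⟩, hextf⟩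

theorem steps_commRest_iff :
    ∀ {ls : List (Lit V D)} {σ σ' : Assg V D},
      Steps (commRest ls, some σ) (.nil, some σ') ↔ σ' = σ ∧ ∀ l ∈ ls, satL σ l
  | [], _, _ => by simp [commRest, steps_skip_iff]
  | l :: ls, σ, σ' => by
    rw [commRest, steps_seq_iff (by simp)]
    simp only [steps_guard_skip_iff, sat_litDC, steps_commRest_iff, List.forall_mem_cons]
    constructor
    · rintro ⟨_, ⟨hl, rfl⟩, rfl, hls⟩
      exact ⟨rfl, hl, hls⟩
    · rintro ⟨rfl, hl, hls⟩
      exact ⟨_, ⟨hl, rfl⟩, rfl, hls⟩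

variable {eqs : List (V × DTerm V D)} {rest : List (Lit V D)} {σ0 : Assg V D}

theorem commandify_sound (hreq : CommReq X eqs rest) (hdom : ∀ x, (σ0 x).isSome ↔ x ∈ X)
    {σ : Assg V D} (h : Steps (commandify X eqs rest, some σ0) (.nil, some σ)) :
    (∀ l ∈ commLits eqs rest, satL σ l) ∧ σ0.Extends σ := by
  obtain ⟨σ₁, h₁, h₂⟩ := (steps_seq_iff commEqs_ne_nil).1 h
  obtain ⟨rfl, hrest⟩ := steps_commRest_iff.1 h₂
  obtain ⟨hext, -, heqs⟩ := commEqs_sound hreq.depsOrdered (by simpa using hdom) h₁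
  exact ⟨forall_mem_commLits.2 ⟨heqs, hrest⟩, hext⟩

theorem commandify_complete (hreq : CommReq X eqs rest) (hdom : ∀ x, (σ0 x).isSome ↔ x ∈ X)
    {σ' : Assg V D} (hsat : ∀ l ∈ commLits eqs rest, satL σ' l) (hext : σ0.Extends σ') :
    ∃ σ, Steps (commandify X eqs rest, some σ0) (.nil, some σ) := by
  have hdom₀ : ∀ y, (σ0 y).isSome ↔ y ∈ X ∨ y ∈ ([] : List V) := by simpa using hdom
  obtain ⟨heqs, hrest⟩ := forall_mem_commLits.1 hsat
  obtain ⟨σ, h₁, hσ⟩ := commEqs_complete hreq.depsOrdered hdom₀ hext heqs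
  obtain ⟨-, hdomσ, -⟩ := commEqs_sound hreq.depsOrdered hdom₀ h₁
  -- after the equations every variable of the constraint is defined, so `σ` agrees with `σ'`
  have hrestσ : ∀ l ∈ rest, satL σ l := fun l hl =>
    (hσ.satL_iff fun y hy => by
      simpa [hdomσ] using hreq.1 l (List.mem_append_right _ hl) y hy).2
      (hrest l hl)
  exact ⟨σ, (steps_seq_iff commEqs_ne_nil).2 ⟨σ, h₁, steps_commRest_iff.2 ⟨rfl, hrestσ⟩⟩⟩

end Commandification

/-- combined soundness and completeness of commandification, for an
initial assignment σ0 with domain exactly X: (i) every successful run produces a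
solution of the literals extending σ0; (ii) if a solution extending σ0 exists, the
run terminates successfully. -/
theorem commandify_sound_complete {V D : Type} [DecidableEq V] (X : Set V)
    (eqs : List (V × DTerm V D)) (rest : List (Lit V D))
    (hreq : CommReq X eqs rest) (σ0 : Assg V D)
    (hdom : ∀ x, (σ0 x).isSome ↔ x ∈ X) :
    ((∀ σ : Assg V D, Steps (commandify X eqs rest, some σ0) (.nil, some σ) →
        (∀ l ∈ commLits eqs rest, satL σ l) ∧ ∀ x d, σ0 x = some d → σ x = some d) ∧
      ((∃ σ' : Assg V D, (∀ l ∈ commLits eqs rest, satL σ' l) ∧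
          ∀ x d, σ0 x = some d → σ' x = some d) →
        ∃ σ : Assg V D, Steps (commandify X eqs rest, some σ0) (.nil, some σ))) :=
  ⟨fun _ h => commandify_sound hreq hdom h,
    fun ⟨_, hsat, hext⟩ => commandify_complete hreq hdom hsat hext⟩
end
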